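/- arXiv:1710.00220 — 6 statements merged into one kernel-verified Lean document; each statement's English description precedes it below -/
import Mathlib

section
/- Let ⊢ be an abstract consequence relation on a set A. Define X ⊢' Y iff X ⊢ a for all a ∈ Y. Then ⊢' is a deductive relation on the dually integral Abelian pomonoid ⟨𝒫(A), ⊆, ∪, ∅⟩. -/
namespace ConsequenceRelation

variable {A : Type*} (vd : Set A → A → Prop)

def LiftEntails (X Y : Set A) : Prop := ∀ a ∈ Y, vd X a

variable {vd}

theorem liftEntails_of_subset (hrefl : ∀ (X : Set A) (a : A), a ∈ X → vd X a)
    {X Y : Set A} (hXY : X ⊆ Y) : LiftEntails vd Y X :=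
  fun a ha => hrefl Y a (hXY ha)

theorem LiftEntails.trans (hcut : ∀ (X Y : Set A) (a : A), vd Y a → (∀ b ∈ Y, vd X b) → vd X a)
    {X Y Z : Set A} (hXY : LiftEntails vd X Y) (hYZ : LiftEntails vd Y Z) :
    LiftEntails vd X Z :=
  fun a ha => hcut X Y a (hYZ a ha) hXY

theorem LiftEntails.union_right (hrefl : ∀ (X : Set A) (a : A), a ∈ X → vd X a)
    (hmono : ∀ (X Y : Set A) (a : A), vd X a → X ⊆ Y → vd Y a)
    {X Y : Set A} (hXY : LiftEntails vd X Y) (Z : Set A) :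
    LiftEntails vd (X ∪ Z) (Y ∪ Z) := by
  rintro a (haY | haZ)
  · exact hmono X (X ∪ Z) a (hXY a haY) Set.subset_union_left
  · exact hrefl _ a (Or.inr haZ)

end ConsequenceRelation

/-- The multi-conclusion lift of an abstract consequence relation on a set `A` is a
deductive relation on the dually integral Abelian pomonoid `⟨𝒫(A), ⊆, ∪, ∅⟩`. -/
theorem acr_lift_is_deductive_relation {A : Type*} (vd : Set A → A → Prop)
    (hrefl : ∀ (X : Set A) (a : A), a ∈ X → vd X a)
    (hmono : ∀ (X Y : Set A) (a : A), vd X a → X ⊆ Y → vd Y a)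
    (hcut : ∀ (X Y : Set A) (a : A), vd Y a → (∀ b ∈ Y, vd X b) → vd X a) :
    (∀ X Y : Set A, X ⊆ Y → (∀ a ∈ X, vd Y a)) ∧
    (∀ X Y Z : Set A, (∀ a ∈ Y, vd X a) → (∀ a ∈ Z, vd Y a) → (∀ a ∈ Z, vd X a)) ∧
    (∀ X Y Z : Set A, (∀ a ∈ Y, vd X a) → (∀ a ∈ Y ∪ Z, vd (X ∪ Z) a)) :=
  ⟨fun _ _ => ConsequenceRelation.liftEntails_of_subset hrefl,
    fun _ _ _ => ConsequenceRelation.LiftEntails.trans hcut,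
    fun _ _ Z hXY => ConsequenceRelation.LiftEntails.union_right hrefl hmono hXY Z⟩
end

section
/- Let L be a complete lattice with order ≤ and bottom 0. Then ⟨L, ≤, ∨, 0⟩ is a dually integral Abelian pomonoid, and every Galatos–Tsinakis consequence relation on L is a deductive relation on ⟨L, ≤, ∨, 0⟩. In particular, compatibility holds: if a ⊢ b then a ∨ c ⊢ b ∨ c. -/
namespace GTCR

variable {L : Type*} [CompleteLattice L] {vd : L → L → Prop}

theorem entails_sup (htrans : ∀ x y z : L, vd x y → vd y z → vd x z)
    (hge : ∀ x y : L, y ≤ x → vd x y) (hsup : ∀ x : L, vd x (sSup {y : L | vd x y}))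
    {x a b : L} (ha : vd x a) (hb : vd x b) : vd x (a ⊔ b) :=
  htrans _ _ _ (hsup x) (hge _ _ (sup_le (le_sSup ha) (le_sSup hb)))

theorem entails_sup_sup_right (htrans : ∀ x y z : L, vd x y → vd y z → vd x z)
    (hge : ∀ x y : L, y ≤ x → vd x y) (hsup : ∀ x : L, vd x (sSup {y : L | vd x y}))
    {a b : L} (h : vd a b) (c : L) : vd (a ⊔ c) (b ⊔ c) :=
  entails_sup htrans hge hsup (htrans _ _ _ (hge _ _ le_sup_left) h) (hge _ _ le_sup_right)

end GTCR

theorem gtcr_is_deductive_relation_general {L : Type*} [CompleteLattice L]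
    (vd : L → L → Prop)
    (htrans : ∀ x y z : L, vd x y → vd y z → vd x z)
    (hge : ∀ x y : L, y ≤ x → vd x y)
    (hsup : ∀ x : L, vd x (sSup {y : L | vd x y})) :
    -- ⟨L, ≤, ∨, ⊥⟩ is a dually integral Abelian pomonoid
    ((∀ a b c : L, (a ⊔ b) ⊔ c = a ⊔ (b ⊔ c)) ∧
     (∀ a b : L, a ⊔ b = b ⊔ a) ∧
     (∀ a : L, a ⊔ ⊥ = a) ∧
     (∀ a b c : L, a ≤ b → a ⊔ c ≤ b ⊔ c) ∧
     (∀ a : L, ⊥ ≤ a)) ∧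
    -- vd is a deductive relation on ⟨L, ≤, ∨, ⊥⟩
    (∀ a b : L, a ≤ b → vd b a) ∧
    (∀ a b c : L, vd a b → vd b c → vd a c) ∧
    (∀ a b c : L, vd a b → vd (a ⊔ c) (b ⊔ c)) :=
  ⟨⟨sup_assoc, sup_comm, sup_bot_eq, fun _ _ c h => sup_le_sup_right h c, fun _ => bot_le⟩,
    fun a b h => hge b a h, htrans,
    fun _ _ c h => GTCR.entails_sup_sup_right htrans hge hsup h c⟩

/-- A complete lattice `⟨L, ≤, ∨, ⊥⟩` is a dually integral Abelian pomonoid and every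
Galatos–Tsinakis consequence relation on `L` is a deductive relation on it; in
particular compatibility holds: `a ⊢ b → a ∨ c ⊢ b ∨ c`. -/
theorem gtcr_is_deductive_relation {L : Type*} [CompleteLattice L]
    (vd : L → L → Prop)
    (hrefl : ∀ x : L, vd x x)
    (htrans : ∀ x y z : L, vd x y → vd y z → vd x z)
    (hge : ∀ x y : L, y ≤ x → vd x y)
    (hsup : ∀ x : L, vd x (sSup {y : L | vd x y})) :
    -- ⟨L, ≤, ∨, ⊥⟩ is a dually integral Abelian pomonoid
    ((∀ a b c : L, (a ⊔ b) ⊔ c = a ⊔ (b ⊔ c)) ∧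
     (∀ a b : L, a ⊔ b = b ⊔ a) ∧
     (∀ a : L, a ⊔ ⊥ = a) ∧
     (∀ a b c : L, a ≤ b → a ⊔ c ≤ b ⊔ c) ∧
     (∀ a : L, ⊥ ≤ a)) ∧
    -- vd is a deductive relation on ⟨L, ≤, ∨, ⊥⟩
    (∀ a b : L, a ≤ b → vd b a) ∧
    (∀ a b c : L, vd a b → vd b c → vd a c) ∧
    (∀ a b c : L, vd a b → vd (a ⊔ c) (b ⊔ c)) :=
  gtcr_is_deductive_relation_general vd htrans hge hsup
end

section
/- Let ⊢ be a finitary abstract consequence relation on a set A with infinitely many theorems, and ⊢' its lifted multi-conclusion version (X ⊢' Y iff X ⊢ a for all a ∈ Y). Define X ⊩ Y iff there is a finite Y' ⊆ Y such that Y \ Y' ⊆ X and X ⊢' Y'. Then ⊩ is a deductive relation on ⟨𝒫(A), ⊆, ∪, ∅⟩ but ⊩ is not a Galatos–Tsinakis consequence relation on the complete lattice 𝒫(A). -/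
/-!
`⊩` inherits reflexivity, transitivity and compatibility with unions from the cut and
monotonicity of `⊢`, since an `X ⊩ Y` gives `X ⊢ b` for every `b ∈ Y`. But `∅ ⊩ Y` forces `Y`
to be finite, while every theorem `a` satisfies `∅ ⊩ {a}`; with infinitely many theorems the
union of all `Z` with `∅ ⊩ Z` is infinite, so `∅` cannot derive it.
-/

/-- The paper's `X ⊩ Y`, with `vd` as `⊢`. -/
def CofiniteDerives {A : Type*} (vd : Set A → A → Prop) (X Y : Set A) : Prop :=
  ∃ Y' ⊆ Y, Y'.Finite ∧ Y \ Y' ⊆ X ∧ ∀ a ∈ Y', vd X a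

namespace CofiniteDerives

variable {A : Type*} {vd : Set A → A → Prop}

theorem of_subset {X Y : Set A} (h : X ⊆ Y) : CofiniteDerives vd Y X :=
  ⟨∅, Set.empty_subset _, Set.finite_empty, by simpa using h, by simp⟩

theorem singleton {X : Set A} {a : A} (h : vd X a) : CofiniteDerives vd X {a} :=
  ⟨{a}, subset_rfl, Set.finite_singleton a, by simp, by simpa using h⟩

theorem forall_vd (hrefl : ∀ (X : Set A) (a : A), a ∈ X → vd X a) {X Y : Set A}
    (h : CofiniteDerives vd X Y) : ∀ b ∈ Y, vd X b := by
  obtain ⟨Y', -, -, hYX, hY'⟩ := h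
  intro b hb
  by_cases hb' : b ∈ Y'
  · exact hY' b hb'
  · exact hrefl X b (hYX ⟨hb, hb'⟩)

theorem trans (hrefl : ∀ (X : Set A) (a : A), a ∈ X → vd X a)
    (hcut : ∀ (X Y : Set A) (a : A), vd Y a → (∀ b ∈ Y, vd X b) → vd X a)
    {X Y Z : Set A} (hXY : CofiniteDerives vd X Y) (hYZ : CofiniteDerives vd Y Z) :
    CofiniteDerives vd X Z := by
  have hXY_all := forall_vd hrefl hXY
  obtain ⟨Y', -, hY'fin, hYX, hY'⟩ := hXY
  obtain ⟨Z', hZ'Z, hZ'fin, hZY, hZ'⟩ := hYZ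
  -- the exceptional part of `Z` is `Z'` together with those elements of `Z` that reach `X`
  -- only through the exceptional part `Y'` of `Y`
  refine ⟨Z' ∪ (Z ∩ Y'), Set.union_subset hZ'Z Set.inter_subset_left,
    hZ'fin.union (hY'fin.subset Set.inter_subset_right), ?_, ?_⟩
  · rintro a ⟨haZ, ha⟩
    simp only [Set.mem_union, Set.mem_inter_iff, not_or, not_and] at ha
    exact hYX ⟨hZY ⟨haZ, ha.1⟩, ha.2 haZ⟩
  · rintro a (ha | ha)
    · exact hcut X Y a (hZ' a ha) hXY_all
    · exact hY' a ha.2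

theorem union_right (hmono : ∀ (X Y : Set A) (a : A), vd X a → X ⊆ Y → vd Y a)
    {X Y : Set A} (Z : Set A) (h : CofiniteDerives vd X Y) :
    CofiniteDerives vd (X ∪ Z) (Y ∪ Z) := by
  obtain ⟨Y', hY'Y, hY'fin, hYX, hY'⟩ := h
  refine ⟨Y', hY'Y.trans Set.subset_union_left, hY'fin, ?_,
    fun a ha => hmono X (X ∪ Z) a (hY' a ha) Set.subset_union_left⟩
  rw [Set.union_sdiff_distrib]
  exact Set.union_subset_union hYX Set.sdiff_subset

theorem finite_of_empty {Y : Set A} (h : CofiniteDerives vd ∅ Y) : Y.Finite := by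
  obtain ⟨Y', -, hY'fin, hY, -⟩ := h
  exact hY'fin.subset (Set.sdiff_eq_empty.1 (Set.subset_empty_iff.1 hY))

theorem infinite_sUnion_empty (hinf : {a : A | vd ∅ a}.Infinite) :
    (⋃₀ {Z : Set A | CofiniteDerives vd ∅ Z}).Infinite :=
  hinf.mono fun a ha => ⟨{a}, singleton ha, rfl⟩

end CofiniteDerives

open CofiniteDerives in
theorem dr_not_gtcr_general {A : Type*} (vd : Set A → A → Prop)
    (hrefl : ∀ (X : Set A) (a : A), a ∈ X → vd X a)
    (hmono : ∀ (X Y : Set A) (a : A), vd X a → X ⊆ Y → vd Y a)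
    (hcut : ∀ (X Y : Set A) (a : A), vd Y a → (∀ b ∈ Y, vd X b) → vd X a)
    (hinf : {a : A | vd ∅ a}.Infinite)
    (Vd : Set A → Set A → Prop)
    (hVd : ∀ X Y : Set A,
      Vd X Y ↔ ∃ Y' : Set A, Y' ⊆ Y ∧ Y'.Finite ∧ Y \ Y' ⊆ X ∧ ∀ a ∈ Y', vd X a) :
    -- Vd is a deductive relation on ⟨𝒫(A), ⊆, ∪, ∅⟩
    ((∀ X Y : Set A, X ⊆ Y → Vd Y X) ∧
     (∀ X Y Z : Set A, Vd X Y → Vd Y Z → Vd X Z) ∧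
     (∀ X Y Z : Set A, Vd X Y → Vd (X ∪ Z) (Y ∪ Z))) ∧
    -- but Vd is not a Galatos–Tsinakis consequence relation on 𝒫(A)
    ¬ ((∀ X : Set A, Vd X X) ∧
       (∀ X Y Z : Set A, Vd X Y → Vd Y Z → Vd X Z) ∧
       (∀ X Y : Set A, X ⊆ Y → Vd Y X) ∧
       (∀ X : Set A, Vd X (⋃₀ {Z : Set A | Vd X Z}))) := by
  obtain rfl : Vd = CofiniteDerives vd :=
    funext₂ fun X Y => propext ((hVd X Y).trans (by simp [CofiniteDerives]))
  exact ⟨⟨fun _ _ => of_subset, fun _ _ _ => trans hrefl hcut, fun _ _ Z => union_right hmono Z⟩,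
    fun ⟨_, _, _, hsup⟩ => infinite_sUnion_empty hinf (finite_of_empty (hsup ∅))⟩

/-- For a finitary abstract consequence relation with infinitely many theorems, the
relation `X ⊩ Y iff ∃ finite Y' ⊆ Y, Y \ Y' ⊆ X and X ⊢ a for all a ∈ Y'` is a
deductive relation on `⟨𝒫(A), ⊆, ∪, ∅⟩` but not a Galatos–Tsinakis consequence
relation on the complete lattice `𝒫(A)`. -/
theorem dr_not_gtcr {A : Type*} (vd : Set A → A → Prop)
    (hrefl : ∀ (X : Set A) (a : A), a ∈ X → vd X a)
    (hmono : ∀ (X Y : Set A) (a : A), vd X a → X ⊆ Y → vd Y a)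
    (hcut : ∀ (X Y : Set A) (a : A), vd Y a → (∀ b ∈ Y, vd X b) → vd X a)
    (hfin : ∀ (X : Set A) (a : A), vd X a → ∃ X' : Set A, X' ⊆ X ∧ X'.Finite ∧ vd X' a)
    (hinf : {a : A | vd ∅ a}.Infinite)
    (Vd : Set A → Set A → Prop)
    (hVd : ∀ X Y : Set A,
      Vd X Y ↔ ∃ Y' : Set A, Y' ⊆ Y ∧ Y'.Finite ∧ Y \ Y' ⊆ X ∧ ∀ a ∈ Y', vd X a) :
    -- Vd is a deductive relation on ⟨𝒫(A), ⊆, ∪, ∅⟩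
    ((∀ X Y : Set A, X ⊆ Y → Vd Y X) ∧
     (∀ X Y Z : Set A, Vd X Y → Vd Y Z → Vd X Z) ∧
     (∀ X Y Z : Set A, Vd X Y → Vd (X ∪ Z) (Y ∪ Z))) ∧
    -- but Vd is not a Galatos–Tsinakis consequence relation on 𝒫(A)
    ¬ ((∀ X : Set A, Vd X X) ∧
       (∀ X Y Z : Set A, Vd X Y → Vd Y Z → Vd X Z) ∧
       (∀ X Y : Set A, X ⊆ Y → Vd Y X) ∧
       (∀ X : Set A, Vd X (⋃₀ {Z : Set A | Vd X Z}))) :=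
  dr_not_gtcr_general vd hrefl hmono hcut hinf Vd hVd
end

section
/- Let L be a complete algebraic lattice with bottom 0 and K(L) its set of compact elements. Then ⟨K(L), ≤, ∨, 0⟩ is a dually integral Abelian pomonoid, and there is a bijective correspondence between finitary Galatos–Tsinakis consequence relations on L and deductive relations on ⟨K(L), ≤, ∨, 0⟩. -/
open CompleteLattice

/-- The (old Mathlib) notion of a compact element of a complete lattice. -/
def CompleteLattice.IsCompactElement {α : Type*} [CompleteLattice α] (k : α) : Prop :=
  ∀ s : Set α, k ≤ sSup s → ∃ t : Finset α, ↑t ⊆ s ∧ k ≤ t.sup id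

/-- The compact elements of a complete lattice `L`, as a type. -/
def KOf (L : Type*) [CompleteLattice L] : Type _ :=
  {x : L // CompleteLattice.IsCompactElement x}

instance (L : Type*) [CompleteLattice L] : PartialOrder (KOf L) :=
  Subtype.partialOrder _

/-- The join of two compact elements is compact. -/
noncomputable def Ksup {L : Type*} [CompleteLattice L] (a b : KOf L) : KOf L :=
  ⟨a.1 ⊔ b.1, by
    classical
    intro s hs
    obtain ⟨t₁, ht₁, h₁⟩ := a.2 s (le_trans le_sup_left hs)
    obtain ⟨t₂, ht₂, h₂⟩ := b.2 s (le_trans le_sup_right hs)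
    refine ⟨t₁ ∪ t₂, ?_, ?_⟩
    · rw [Finset.coe_union]
      exact Set.union_subset ht₁ ht₂
    · exact sup_le (h₁.trans (Finset.sup_mono Finset.subset_union_left))
        (h₂.trans (Finset.sup_mono Finset.subset_union_right))⟩

/-- The bottom element is compact. -/
def Kbot (L : Type*) [CompleteLattice L] : KOf L :=
  ⟨⊥, fun s _ => ⟨∅, by simp⟩⟩

/-- Finitary Galatos–Tsinakis consequence relations on a complete lattice. -/
def IsFinGTCR {L : Type*} [CompleteLattice L] (r : L → L → Prop) : Prop :=
  (∀ x, r x x) ∧ (∀ x y z, r x y → r y z → r x z) ∧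
  (∀ x y, y ≤ x → r x y) ∧
  (∀ x, r x (sSup {y : L | r x y})) ∧
  (∀ a b, CompleteLattice.IsCompactElement b → r a b →
    ∃ a' : L, CompleteLattice.IsCompactElement a' ∧ a' ≤ a ∧ r a' b)

/-- Deductive relations on the pomonoid of compact elements `⟨K(L), ≤, ∨, ⊥⟩`. -/
def IsDRK {L : Type*} [CompleteLattice L] (r : KOf L → KOf L → Prop) : Prop :=
  (∀ a b : KOf L, a ≤ b → r b a) ∧
  (∀ a b c : KOf L, r a b → r b c → r a c) ∧
  (∀ a b c : KOf L, r a b → r (Ksup a c) (Ksup b c))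

/-!
A finitary GTCR `⊢` restricts to a deductive relation on `K(L)`; conversely a deductive relation
`⊩` extends to `L` by declaring `x ⊢ y` when every compact `b ≤ y` has `a ⊩ b` for some compact
`a ≤ x`. Algebraicity and finitarity make the two maps mutually inverse. The delicate GTCR axiom is
`x ⊢ ⋁ {y | x ⊢ y}`: the compact elements derivable from `x` form an ideal of `K(L)`, so their join
is directed, and a compact element below it already lies below one of them.
-/

section CompactElements

variable {L : Type*} [CompleteLattice L]

theorem CompleteLattice.isCompactElement_iff_isCompactElement {k : L} :
    CompleteLattice.IsCompactElement k ↔ _root_.IsCompactElement k :=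
  (isCompactElement_iff_exists_le_sSup_of_le_sSup _ k).symm

theorem KOf.exists_mem_le_of_le_sSup (b : KOf L) {S : Set L} (hne : S.Nonempty)
    (hdir : DirectedOn (· ≤ ·) S) (hb : b.1 ≤ sSup S) : ∃ y ∈ S, b.1 ≤ y :=
  (isCompactElement_iff_le_of_directed_sSup_le _ b.1).mp
    (isCompactElement_iff_isCompactElement.mp b.2) S hne hdir hb

theorem le_of_forall_KOf_le [IsCompactlyGenerated L] {x y : L}
    (h : ∀ c : KOf L, c.1 ≤ x → c.1 ≤ y) : x ≤ y :=
  le_iff_compact_le_imp.mpr fun c hc hcx => h ⟨c, isCompactElement_iff_isCompactElement.mpr hc⟩ hcx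

theorem Ksup_assoc (a b c : KOf L) : Ksup (Ksup a b) c = Ksup a (Ksup b c) :=
  Subtype.ext (sup_assoc _ _ _)

theorem Ksup_comm (a b : KOf L) : Ksup a b = Ksup b a :=
  Subtype.ext (sup_comm _ _)

theorem Ksup_Kbot (a : KOf L) : Ksup a (Kbot L) = a :=
  Subtype.ext (sup_bot_eq _)

theorem Ksup_le_Ksup_right {a b : KOf L} (h : a ≤ b) (c : KOf L) : Ksup a c ≤ Ksup b c :=
  sup_le_sup_right h _

theorem Kbot_le (a : KOf L) : Kbot L ≤ a :=
  bot_le (a := a.1)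

end CompactElements

namespace IsDRK

variable {L : Type*} [CompleteLattice L] {s : KOf L → KOf L → Prop}

theorem refl (hs : IsDRK s) (a : KOf L) : s a a :=
  hs.1 a a le_rfl

theorem trans (hs : IsDRK s) {a b c : KOf L} (hab : s a b) (hbc : s b c) : s a c :=
  hs.2.1 a b c hab hbc

theorem of_le (hs : IsDRK s) {a b : KOf L} (h : b ≤ a) : s a b :=
  hs.1 b a h

theorem mono_right (hs : IsDRK s) {a b c : KOf L} (h : s a b) (hc : c ≤ b) : s a c :=
  hs.trans h (hs.of_le hc)

theorem mono_left (hs : IsDRK s) {a a' b : KOf L} (h : a ≤ a') (hab : s a b) : s a' b :=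
  hs.trans (hs.of_le h) hab

theorem Ksup_Ksup (hs : IsDRK s) {a₁ a₂ b₁ b₂ : KOf L} (h₁ : s a₁ b₁) (h₂ : s a₂ b₂) :
    s (Ksup a₁ a₂) (Ksup b₁ b₂) := by
  have h₂' : s (Ksup b₁ a₂) (Ksup b₁ b₂) := by
    simpa only [Ksup_comm b₁] using hs.2.2 a₂ b₂ b₁ h₂
  exact hs.trans (hs.2.2 a₁ b₁ a₂ h₁) h₂'

end IsDRK

section Correspondence

variable {L : Type*} [CompleteLattice L]

def restrictToCompact (r : L → L → Prop) : KOf L → KOf L → Prop :=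
  fun a b => r a.1 b.1

def derivableFrom (s : KOf L → KOf L → Prop) (x : L) : Set (KOf L) :=
  {b | ∃ a : KOf L, a.1 ≤ x ∧ s a b}

def extendFromCompact (s : KOf L → KOf L → Prop) : L → L → Prop :=
  fun x y => ∀ b : KOf L, b.1 ≤ y → b ∈ derivableFrom s x

theorem IsFinGTCR.restrictToCompact_isDRK {r : L → L → Prop} (hr : IsFinGTCR r) :
    IsDRK (restrictToCompact r) := by
  obtain ⟨-, htrans, hle, hsSup, -⟩ := hr
  refine ⟨fun a b h => hle _ _ h, fun a b c => htrans _ _ _, fun a b c h => ?_⟩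
  set x := a.1 ⊔ c.1
  have hxb : r x b.1 := htrans _ _ _ (hle _ _ le_sup_left) h
  have hxc : r x c.1 := hle _ _ le_sup_right
  exact htrans _ _ _ (hsSup x) (hle _ _ (sup_le (le_sSup hxb) (le_sSup hxc)))

variable {s : KOf L → KOf L → Prop}

theorem IsDRK.directedOn_val_derivableFrom (hs : IsDRK s) (x : L) :
    DirectedOn (· ≤ ·) (Subtype.val '' derivableFrom s x) := by
  rintro _ ⟨b₁, ⟨a₁, ha₁, h₁⟩, rfl⟩ _ ⟨b₂, ⟨a₂, ha₂, h₂⟩, rfl⟩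
  exact ⟨_, ⟨Ksup b₁ b₂, ⟨Ksup a₁ a₂, sup_le ha₁ ha₂, hs.Ksup_Ksup h₁ h₂⟩, rfl⟩, le_sup_left,
    le_sup_right⟩

theorem IsDRK.extendFromCompact_sSup_setOf [IsCompactlyGenerated L] (hs : IsDRK s) (x : L) :
    extendFromCompact s x (sSup {y | extendFromCompact s x y}) := by
  have hD : sSup {y | extendFromCompact s x y} ≤ sSup (Subtype.val '' derivableFrom s x) :=
    sSup_le fun y hy => le_of_forall_KOf_le fun c hcy => le_sSup ⟨c, hy c hcy, rfl⟩
  have hne : (derivableFrom s x).Nonempty := ⟨Kbot L, Kbot L, bot_le, hs.refl _⟩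
  intro b hb
  obtain ⟨_, ⟨d, ⟨a, hax, had⟩, rfl⟩, hbd⟩ := b.exists_mem_le_of_le_sSup (hne.image _)
    (hs.directedOn_val_derivableFrom x) (hb.trans hD)
  exact ⟨a, hax, hs.mono_right had hbd⟩

theorem IsDRK.extendFromCompact_isFinGTCR [IsCompactlyGenerated L] (hs : IsDRK s) :
    IsFinGTCR (extendFromCompact s) := by
  refine ⟨fun x b hb => ⟨b, hb, hs.refl b⟩, ?_, ?_, hs.extendFromCompact_sSup_setOf, ?_⟩
  · intro x y z hxy hyz c hc
    obtain ⟨b, hby, hbc⟩ := hyz c hc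
    obtain ⟨a, hax, hab⟩ := hxy b hby
    exact ⟨a, hax, hs.trans hab hbc⟩
  · exact fun x y hyx b hb => ⟨b, hb.trans hyx, hs.refl b⟩
  · intro x b hb hxb
    obtain ⟨a, hax, hab⟩ := hxb ⟨b, hb⟩ le_rfl
    exact ⟨a.1, a.2, hax, fun c hc => ⟨a, le_rfl, hs.mono_right hab hc⟩⟩

theorem IsDRK.restrictToCompact_extendFromCompact (hs : IsDRK s) :
    restrictToCompact (extendFromCompact s) = s := by
  funext a b
  refine propext ⟨fun h => ?_, fun h c hc => ⟨a, le_rfl, hs.mono_right h hc⟩⟩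
  obtain ⟨a', ha', hab⟩ := h b le_rfl
  exact hs.mono_left ha' hab

theorem IsFinGTCR.extendFromCompact_restrictToCompact [IsCompactlyGenerated L]
    {r : L → L → Prop} (hr : IsFinGTCR r) : extendFromCompact (restrictToCompact r) = r := by
  obtain ⟨-, htrans, hle, hsSup, hfin⟩ := hr
  funext x y
  refine propext ⟨fun h => ?_, fun h b hb => ?_⟩
  · have hy : y ≤ sSup {z | r x z} := le_of_forall_KOf_le fun c hcy => by
      obtain ⟨a, hax, hac⟩ := h c hcy
      exact le_sSup (htrans _ _ _ (hle _ _ hax) hac)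
    exact htrans _ _ _ (hsSup x) (hle _ _ hy)
  · obtain ⟨a, ha, hax, hab⟩ := hfin x b.1 b.2 (htrans _ _ _ h (hle _ _ hb))
    exact ⟨⟨a, ha⟩, hax, hab⟩

noncomputable def finGTCREquivDRK [IsCompactlyGenerated L] :
    {r : L → L → Prop // IsFinGTCR r} ≃ {s : KOf L → KOf L → Prop // IsDRK s} where
  toFun r := ⟨restrictToCompact r.1, r.2.restrictToCompact_isDRK⟩
  invFun s := ⟨extendFromCompact s.1, s.2.extendFromCompact_isFinGTCR⟩
  left_inv r := Subtype.ext r.2.extendFromCompact_restrictToCompact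
  right_inv s := Subtype.ext s.2.restrictToCompact_extendFromCompact

end Correspondence

/-- In a complete algebraic lattice `L`, the compact elements form a dually integral
Abelian pomonoid `⟨K(L), ≤, ∨, ⊥⟩`, and there is a bijective correspondence between
finitary Galatos–Tsinakis consequence relations on `L` and deductive relations
on `K(L)`. -/
theorem compact_elements_pomonoid_and_bijection
    (L : Type*) [CompleteLattice L] [IsCompactlyGenerated L] :
    -- ⟨K(L), ≤, ∨, ⊥⟩ is a dually integral Abelian pomonoid
    ((∀ a b c : KOf L, Ksup (Ksup a b) c = Ksup a (Ksup b c)) ∧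
     (∀ a b : KOf L, Ksup a b = Ksup b a) ∧
     (∀ a : KOf L, Ksup a (Kbot L) = a) ∧
     (∀ a b c : KOf L, a ≤ b → Ksup a c ≤ Ksup b c) ∧
     (∀ a : KOf L, Kbot L ≤ a)) ∧
    -- bijective correspondence
    Nonempty
      ({r : L → L → Prop // IsFinGTCR r} ≃ {r : KOf L → KOf L → Prop // IsDRK r}) :=
  ⟨⟨Ksup_assoc, Ksup_comm, Ksup_Kbot, fun _ _ c h => Ksup_le_Ksup_right h c, Kbot_le⟩,
    ⟨finGTCREquivDRK⟩⟩
end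

section
/- Let ⊢ be a deductive relation on a dually integral Abelian pomonoid R = ⟨R, ≤, +, 0⟩. Define on the set Th^p(⊢) of principal theories the operation Th(x) +⊢ Th(y) = Th(x+y). Then this operation is well defined, and ⟨Th^p(⊢), ⊆, +⊢, Th(0)⟩ is a dually integral Abelian pomonoid, and the map x ↦ Th(x) is a surjective order-preserving monoid homomorphism from R onto it. -/
/-! Inclusion of principal theories is the converse of `⊢`: `Th x ⊆ Th y ↔ y ⊢ x`. Hence the
compatibility of `⊢` with `+` makes `+⊢` well defined and monotone, and `a ≤ b → b ⊢ a` makes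
`Th` monotone, with `Th 0` at the bottom. -/

section PrincipalTheory

variable {R : Type*}

def principalTheory (vd : R → R → Prop) (x : R) : Set R := {b | vd x b}

variable {vd : R → R → Prop}

theorem principalTheory_subset_iff (hrefl : ∀ a, vd a a)
    (htrans : ∀ a b c, vd a b → vd b c → vd a c) {x y : R} :
    principalTheory vd x ⊆ principalTheory vd y ↔ vd y x :=
  ⟨fun h => h (hrefl x), fun h _ hb => htrans y x _ h hb⟩

theorem principalTheory_mono [LE R] (hle : ∀ a b : R, a ≤ b → vd b a)
    (htrans : ∀ a b c, vd a b → vd b c → vd a c) {x y : R} (h : x ≤ y) :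
    principalTheory vd x ⊆ principalTheory vd y :=
  fun _ hb => htrans y x _ (hle x y h) hb

section Add

variable [AddCommMagma R] (hrefl : ∀ a, vd a a) (htrans : ∀ a b c, vd a b → vd b c → vd a c)
  (hcompat : ∀ a b c, vd a b → vd (a + c) (b + c))
include hrefl htrans hcompat

theorem principalTheory_add_subset_add_right {x y : R} (z : R)
    (h : principalTheory vd x ⊆ principalTheory vd y) :
    principalTheory vd (x + z) ⊆ principalTheory vd (y + z) := by
  rw [principalTheory_subset_iff hrefl htrans] at h ⊢
  exact hcompat y x z h

theorem principalTheory_add_subset_add {x y x' y' : R}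
    (hx : principalTheory vd x ⊆ principalTheory vd x')
    (hy : principalTheory vd y ⊆ principalTheory vd y') :
    principalTheory vd (x + y) ⊆ principalTheory vd (x' + y') :=
  calc principalTheory vd (x + y)
      _ ⊆ principalTheory vd (x' + y) :=
        principalTheory_add_subset_add_right hrefl htrans hcompat y hx
      _ = principalTheory vd (y + x') := by rw [add_comm]
      _ ⊆ principalTheory vd (y' + x') :=
        principalTheory_add_subset_add_right hrefl htrans hcompat x' hy
      _ = principalTheory vd (x' + y') := by rw [add_comm]

theorem principalTheory_add_congr {x y x' y' : R}
    (hx : principalTheory vd x = principalTheory vd x')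
    (hy : principalTheory vd y = principalTheory vd y') :
    principalTheory vd (x + y) = principalTheory vd (x' + y') :=
  (principalTheory_add_subset_add hrefl htrans hcompat hx.le hy.le).antisymm
    (principalTheory_add_subset_add hrefl htrans hcompat hx.ge hy.ge)

end Add

end PrincipalTheory

theorem principal_theories_pomonoid_general
    {R : Type*} [PartialOrder R] [AddCommMonoid R]
    (hbot : ∀ a : R, (0 : R) ≤ a)
    (vd : R → R → Prop)
    (hrefl : ∀ a b : R, a ≤ b → vd b a)
    (htrans : ∀ a b c : R, vd a b → vd b c → vd a c)
    (hcompat : ∀ a b c : R, vd a b → vd (a + c) (b + c))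
    (Th : R → Set R) (hTh : ∀ x : R, Th x = {b : R | vd x b}) :
    -- the operation Th(x) +⊢ Th(y) = Th(x+y) is well defined
    (∀ x y x' y' : R, Th x = Th x' → Th y = Th y' → Th (x + y) = Th (x' + y')) ∧
    -- Th(0) is the bottom element of ⟨Th^p(⊢), ⊆⟩
    (∀ x : R, Th 0 ⊆ Th x) ∧
    -- +⊢ is compatible with the inclusion order
    (∀ x y z : R, Th x ⊆ Th y → Th (x + z) ⊆ Th (y + z)) ∧
    -- Th is order-preserving (and it is a surjective monoid morphism by definition
    -- of the structure on the image)
    (∀ x y : R, x ≤ y → Th x ⊆ Th y) ∧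
    (∀ T ∈ Th '' Set.univ, ∃ x : R, Th x = T) := by
  obtain rfl : Th = principalTheory vd := funext hTh
  have hvd_refl : ∀ a, vd a a := fun a => hrefl a a le_rfl
  exact ⟨fun _ _ _ _ => principalTheory_add_congr hvd_refl htrans hcompat,
    fun x => principalTheory_mono hrefl htrans (hbot x),
    fun _ _ z => principalTheory_add_subset_add_right hvd_refl htrans hcompat z,
    fun _ _ => principalTheory_mono hrefl htrans,
    fun _ ⟨x, _, hx⟩ => ⟨x, hx⟩⟩

/-- The principal theories `Th(x) = {b : x ⊢ b}` of a deductive relation form a dually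
integral Abelian pomonoid under `Th(x) + Th(y) = Th(x+y)`, ordered by inclusion with
bottom `Th(0)`, and `x ↦ Th(x)` is a surjective order-preserving monoid morphism. -/
theorem principal_theories_pomonoid
    {R : Type*} [PartialOrder R] [AddCommMonoid R]
    (hcomp : ∀ a b c : R, a ≤ b → a + c ≤ b + c)
    (hbot : ∀ a : R, (0 : R) ≤ a)
    (vd : R → R → Prop)
    (hrefl : ∀ a b : R, a ≤ b → vd b a)
    (htrans : ∀ a b c : R, vd a b → vd b c → vd a c)
    (hcompat : ∀ a b c : R, vd a b → vd (a + c) (b + c))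
    (Th : R → Set R) (hTh : ∀ x : R, Th x = {b : R | vd x b}) :
    -- the operation Th(x) +⊢ Th(y) = Th(x+y) is well defined
    (∀ x y x' y' : R, Th x = Th x' → Th y = Th y' → Th (x + y) = Th (x' + y')) ∧
    -- Th(0) is the bottom element of ⟨Th^p(⊢), ⊆⟩
    (∀ x : R, Th 0 ⊆ Th x) ∧
    -- +⊢ is compatible with the inclusion order
    (∀ x y z : R, Th x ⊆ Th y → Th (x + z) ⊆ Th (y + z)) ∧
    -- Th is order-preserving (and it is a surjective monoid morphism by definition
    -- of the structure on the image)
    (∀ x y : R, x ≤ y → Th x ⊆ Th y) ∧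
    (∀ T ∈ Th '' Set.univ, ∃ x : R, Th x = T) :=
  principal_theories_pomonoid_general hbot vd hrefl htrans hcompat Th hTh
end

section
/- Let A be a dually integral po-semiring, viewed as an A-module over itself with action given by multiplication. Then A is cyclic (generated by 1) and onto-projective in the category of A-modules: for any morphisms f : S → T with f onto and g : A → T, there is a morphism h : A → S with f ∘ h = g. -/
/-- A module over a dually integral po-semiring `A`. -/
structure PoModule (A : Type*) (R : Type*) [Semiring A] [PartialOrder A] [IsOrderedRing A]
    [AddCommMonoid R] [PartialOrder R] [IsOrderedAddMonoid R] where
  smul : A → R → R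
  mul_smul : ∀ (σ π : A) (a : R), smul (σ * π) a = smul σ (smul π a)
  one_smul : ∀ a : R, smul 1 a = a
  zero_smul : ∀ a : R, smul 0 a = 0
  smul_add : ∀ (σ : A) (a b : R), smul σ (a + b) = smul σ a + smul σ b
  add_smul : ∀ (σ π : A) (a : R), smul (σ + π) a = smul σ a + smul π a
  smul_mono_left : ∀ (σ π : A) (a : R), σ ≤ π → smul σ a ≤ smul π a
  smul_mono_right : ∀ (σ : A) (a b : R), a ≤ b → smul σ a ≤ smul σ b

/-- Morphisms of `A`-modules. -/
def IsModMor {A R S : Type*} [Semiring A] [PartialOrder A] [IsOrderedRing A]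
    [AddCommMonoid R] [PartialOrder R] [IsOrderedAddMonoid R]
    [AddCommMonoid S] [PartialOrder S] [IsOrderedAddMonoid S] (MR : PoModule A R) (MS : PoModule A S)
    (f : R → S) : Prop :=
  (∀ a b : R, a ≤ b → f a ≤ f b) ∧ (f 0 = 0) ∧
  (∀ a b : R, f (a + b) = f a + f b) ∧
  (∀ (σ : A) (a : R), f (MR.smul σ a) = MS.smul σ (f a))

/-- A dually integral po-semiring `A`, viewed as a module over itself with the action
given by multiplication. -/
def selfModule (A : Type*) [Semiring A] [PartialOrder A] [IsOrderedRing A] (hbot : ∀ σ : A, (0 : A) ≤ σ) :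
    PoModule A A where
  smul := (· * ·)
  mul_smul := mul_assoc
  one_smul := one_mul
  zero_smul := zero_mul
  smul_add := mul_add
  add_smul := add_mul
  smul_mono_left := fun _ _ a h => mul_le_mul_of_nonneg_right h (hbot a)
  smul_mono_right := fun σ _ _ h => mul_le_mul_of_nonneg_left h (hbot σ)

section PoModule

variable {A : Type*} [Semiring A] [PartialOrder A] [IsOrderedRing A]
variable {R S : Type*} [AddCommMonoid R] [PartialOrder R] [IsOrderedAddMonoid R]
  [AddCommMonoid S] [PartialOrder S] [IsOrderedAddMonoid S]

theorem selfModule_smul_one (hbot : ∀ σ : A, (0 : A) ≤ σ) (σ : A) :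
    (selfModule A hbot).smul σ 1 = σ :=
  mul_one σ

theorem PoModule.isModMor_smul_left (hbot : ∀ σ : A, (0 : A) ≤ σ) (M : PoModule A R) (s : R) :
    IsModMor (selfModule A hbot) M (fun σ => M.smul σ s) :=
  ⟨fun σ π h => M.smul_mono_left σ π s h, M.zero_smul s, fun σ π => M.add_smul σ π s,
    fun σ π => M.mul_smul σ π s⟩

theorem IsModMor.eq_smul_map_one {hbot : ∀ σ : A, (0 : A) ≤ σ} {M : PoModule A R} {g : A → R}
    (hg : IsModMor (selfModule A hbot) M g) (σ : A) : g σ = M.smul σ (g 1) := by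
  rw [← hg.2.2.2, selfModule_smul_one]

theorem IsModMor.comp_smul_left_eq {hbot : ∀ σ : A, (0 : A) ≤ σ} {MS : PoModule A S}
    {MR : PoModule A R} {f : S → R} {g : A → R} (hf : IsModMor MS MR f)
    (hg : IsModMor (selfModule A hbot) MR g) {s : S} (hs : f s = g 1) :
    f ∘ (fun σ => MS.smul σ s) = g := by
  funext σ
  rw [Function.comp_apply, hf.2.2.2, hs]
  exact (hg.eq_smul_map_one σ).symm

end PoModule

/-- A dually integral po-semiring, as a module over itself, is cyclic (generated by
`1`) and onto-projective in the category of `A`-modules. -/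
theorem posemiring_self_module_cyclic_and_projective
    (A : Type*) [Semiring A] [PartialOrder A] [IsOrderedRing A] (hbot : ∀ σ : A, (0 : A) ≤ σ) :
    -- cyclic, generated by 1
    (∀ x : A, ∃ σ : A, (selfModule A hbot).smul σ 1 = x) ∧
    -- onto-projective
    (∀ (S : Type*) (T : Type*), ∀ (_ : AddCommMonoid S) (_ : PartialOrder S) (_ : IsOrderedAddMonoid S)
      (_ : AddCommMonoid T) (_ : PartialOrder T) (_ : IsOrderedAddMonoid T), ∀ (MS : PoModule A S) (MT : PoModule A T)
      (f : S → T) (g : A → T),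
      IsModMor MS MT f → Function.Surjective f →
      IsModMor (selfModule A hbot) MT g →
      ∃ h : A → S, IsModMor (selfModule A hbot) MS h ∧ f ∘ h = g) := by
  refine ⟨fun x => ⟨x, selfModule_smul_one hbot x⟩, ?_⟩
  intro S T _ _ _ _ _ _ MS MT f g hf hsurj hg
  obtain ⟨s, hs⟩ := hsurj (g 1)
  exact ⟨_, MS.isModMor_smul_left hbot s, hf.comp_smul_left_eq hg hs⟩
end
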